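/- Let M ≥ N ≥ 1 and ℓ ≥ 1, let C be a real M × N matrix with rank(C) = N, and let D be a real ℓ × N matrix with r = rank(D). Set P = CᵀC (a symmetric positive definite matrix), B = CᵀC + DᵀD, and S = P^{−1/2} B P^{−1/2}, where P^{1/2} is the unique symmetric positive definite square root of P and P^{−1/2} is its inverse. Then S is symmetric, and counted with multiplicity: exactly N − r of the eigenvalues of S are equal to 1, and exactly r of the eigenvalues of S are strictly greater than 1. -/

import Mathlib

/-!
With `R = P^{1/2}` we have `S = R⁻¹ (R² + DᵀD) R⁻¹ = 1 + K` where `K = (D R⁻¹)ᵀ (D R⁻¹)` is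
positive semidefinite of rank `rank D`. Hence every eigenvalue of `S` is at least `1` (Rayleigh
quotients), and by the spectral theorem the number of eigenvalues different from `1` is
`rank (S - 1) = rank D`.
-/

open scoped Classical
open Matrix

open scoped ComplexOrder in
/-- The positive semidefinite square root of a positive semidefinite matrix
(the definition Mathlib had before it was removed). -/
noncomputable def Matrix.PosSemidef.sqrt {n 𝕜 : Type*} [Fintype n] [RCLike 𝕜] [DecidableEq n]
    {A : Matrix n n 𝕜} (hA : A.PosSemidef) : Matrix n n 𝕜 :=
  hA.1.eigenvectorUnitary.1 * diagonal ((↑) ∘ Real.sqrt ∘ hA.1.eigenvalues) *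
  (star hA.1.eigenvectorUnitary : Matrix n n 𝕜)

open scoped ComplexOrder

namespace Matrix

variable {n 𝕜 : Type*} [Fintype n] [RCLike 𝕜]

lemma IsHermitian.mul_conjTranspose_mul_self_mul {m : Type*} [Fintype m] {Q : Matrix n n 𝕜}
    (hQ : Q.IsHermitian) (D : Matrix m n 𝕜) : Q * (Dᴴ * D) * Q = (D * Q)ᴴ * (D * Q) := by
  rw [conjTranspose_mul, hQ.eq]
  simp only [Matrix.mul_assoc]

variable [DecidableEq n]

namespace IsHermitian

variable {A : Matrix n n 𝕜}

lemma rank_sub_algebraMap (hA : A.IsHermitian) (μ : ℝ) :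
    (A - algebraMap 𝕜 _ μ).rank = Fintype.card {i // hA.eigenvalues i ≠ μ} := by
  have hshift : A - algebraMap 𝕜 _ μ = Unitary.conjStarAlgAut 𝕜 _ hA.eigenvectorUnitary
      (diagonal (RCLike.ofReal ∘ fun i => hA.eigenvalues i - μ)) := by
    conv_lhs => rw [hA.spectral_theorem, ← AlgHomClass.commutes
      (Unitary.conjStarAlgAut 𝕜 (Matrix n n 𝕜) hA.eigenvectorUnitary), ← map_sub]
    congr 1
    ext i j
    rcases eq_or_ne i j with rfl | h <;> simp [*, algebraMap_eq_diagonal]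
  rw [hshift, Unitary.conjStarAlgAut_apply, ← Unitary.coe_star]
  simp [-isUnit_iff_ne_zero, -Unitary.coe_star, rank_diagonal, sub_eq_zero]

lemma le_eigenvalues_of_posSemidef_sub (hA : A.IsHermitian) {μ : ℝ}
    (h : (A - algebraMap 𝕜 _ μ).PosSemidef) (i : n) : μ ≤ hA.eigenvalues i := by
  have hunit : star ⇑(hA.eigenvectorBasis i) ⬝ᵥ ⇑(hA.eigenvectorBasis i) = 1 := by
    rw [dotProduct_comm, ← EuclideanSpace.inner_eq_star_dotProduct, inner_self_eq_norm_sq_to_K,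
      hA.eigenvectorBasis.orthonormal.1 i]
    simp
  have := h.re_dotProduct_nonneg (hA.eigenvectorBasis i)
  rw [Algebra.algebraMap_eq_smul_one, sub_mulVec, smul_mulVec, one_mulVec, dotProduct_sub,
    dotProduct_smul, hunit, map_sub, ← hA.eigenvalues_eq i] at this
  simpa [sub_nonneg] using this

lemma card_eigenvalues_of_posSemidef_sub_one (hA : A.IsHermitian) (h : (A - 1).PosSemidef) :
    (Finset.univ.filter fun i => hA.eigenvalues i = 1).card = Fintype.card n - (A - 1).rank ∧
    (Finset.univ.filter fun i => 1 < hA.eigenvalues i).card = (A - 1).rank := by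
  have hrank : (A - 1).rank = (Finset.univ.filter fun i => hA.eigenvalues i ≠ 1).card := by
    simpa [Fintype.card_subtype] using hA.rank_sub_algebraMap 1
  have hge : ∀ i, 1 ≤ hA.eigenvalues i :=
    hA.le_eigenvalues_of_posSemidef_sub (by simpa using h)
  constructor
  · have hsplit := Finset.card_filter_add_card_filter_not (s := Finset.univ)
      (fun i => hA.eigenvalues i = 1)
    rw [hrank]
    exact Nat.eq_sub_of_add_eq (by simpa using hsplit)
  · rw [hrank]
    congr 1
    ext i
    simpa using ⟨ne_of_gt, fun h => lt_of_le_of_ne (hge i) (Ne.symm h)⟩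

end IsHermitian

namespace PosSemidef

variable {A : Matrix n n 𝕜} (hA : A.PosSemidef)

lemma sqrt_eq_conjStarAlgAut : hA.sqrt = Unitary.conjStarAlgAut 𝕜 _ hA.1.eigenvectorUnitary
    (diagonal (RCLike.ofReal ∘ Real.sqrt ∘ hA.1.eigenvalues)) := rfl

lemma isHermitian_sqrt : hA.sqrt.IsHermitian := by
  rw [sqrt_eq_conjStarAlgAut, IsHermitian, ← star_eq_conjTranspose, ← map_star,
    star_eq_conjTranspose, diagonal_conjTranspose]
  congr 2
  ext i
  simp

lemma sqrt_mul_self : hA.sqrt * hA.sqrt = A := by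
  rw [sqrt_eq_conjStarAlgAut, ← map_mul, diagonal_mul_diagonal]
  conv_rhs => rw [hA.1.spectral_theorem]
  congr 2
  ext i
  simp [← RCLike.ofReal_mul, Real.mul_self_sqrt (hA.eigenvalues_nonneg i)]

end PosSemidef

lemma PosDef.isUnit_det_sqrt {A : Matrix n n 𝕜} (hA : A.PosDef) :
    IsUnit hA.posSemidef.sqrt.det := by
  have h : IsUnit (hA.posSemidef.sqrt.det * hA.posSemidef.sqrt.det) := by
    rw [← det_mul, hA.posSemidef.sqrt_mul_self]
    exact hA.isUnit.map detMonoidHom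
  exact isUnit_of_mul_isUnit_left h

lemma nonsing_inv_mul_add_mul_nonsing_inv {R P E : Matrix n n 𝕜} (hR : IsUnit R.det)
    (hRR : R * R = P) : R⁻¹ * (P + E) * R⁻¹ = 1 + R⁻¹ * E * R⁻¹ := by
  rw [← hRR, Matrix.mul_add, Matrix.add_mul, ← Matrix.mul_assoc, nonsing_inv_mul R hR,
    Matrix.one_mul, mul_nonsing_inv R hR]

end Matrix

theorem preconditioned_spectrum_tall_general
    {M N L : ℕ}
    (C : Matrix (Fin M) (Fin N) ℝ)
    (D : Matrix (Fin L) (Fin N) ℝ)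
    (hP : (Cᵀ * C).PosDef) :
    ((hP.posSemidef.sqrt)⁻¹ * (Cᵀ * C + Dᵀ * D) * (hP.posSemidef.sqrt)⁻¹).IsSymm ∧
    ∃ hS : ((hP.posSemidef.sqrt)⁻¹ * (Cᵀ * C + Dᵀ * D) *
        (hP.posSemidef.sqrt)⁻¹).IsHermitian,
      (Finset.univ.filter fun i => hS.eigenvalues i = 1).card = N - D.rank ∧
      (Finset.univ.filter fun i => 1 < hS.eigenvalues i).card = D.rank := by
  set R := hP.posSemidef.sqrt
  have hR : IsUnit R.det := hP.isUnit_det_sqrt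
  have hS : R⁻¹ * (Cᵀ * C + Dᵀ * D) * R⁻¹ = 1 + (D * R⁻¹)ᴴ * (D * R⁻¹) := by
    rw [nonsing_inv_mul_add_mul_nonsing_inv hR hP.posSemidef.sqrt_mul_self,
      ← conjTranspose_eq_transpose_of_trivial,
      hP.posSemidef.isHermitian_sqrt.inv.mul_conjTranspose_mul_self_mul]
  have hK := posSemidef_conjTranspose_mul_self (D * R⁻¹)
  have hKrank : ((D * R⁻¹)ᴴ * (D * R⁻¹)).rank = D.rank := by
    rw [rank_conjTranspose_mul_self,
      rank_mul_eq_left_of_isUnit_det _ _ (isUnit_nonsing_inv_det R hR)]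
  have hSH : (R⁻¹ * (Cᵀ * C + Dᵀ * D) * R⁻¹).IsHermitian := hS ▸ isHermitian_one.add hK.1
  have hS1 : R⁻¹ * (Cᵀ * C + Dᵀ * D) * R⁻¹ - 1 = (D * R⁻¹)ᴴ * (D * R⁻¹) := by
    rw [hS, add_sub_cancel_left]
  refine ⟨isHermitian_iff_isSymm.mp hSH, hSH, ?_⟩
  simpa only [hS1, hKrank, Fintype.card_fin] using
    hSH.card_eigenvalues_of_posSemidef_sub_one (hS1 ▸ hK)

/-- Spectrum of the preconditioned matrix `S = P^{-1/2} B P^{-1/2}` with `P = CᵀC` and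
`B = CᵀC + DᵀD`: `S` is symmetric, `N − rank D` of its eigenvalues are equal to `1`, and
`rank D` of its eigenvalues are strictly greater than `1` (counted with multiplicity). -/
theorem preconditioned_spectrum_tall
    {M N L : ℕ} (hMN : N ≤ M) (hN : 1 ≤ N) (hL : 1 ≤ L)
    (C : Matrix (Fin M) (Fin N) ℝ) (hC : C.rank = N)
    (D : Matrix (Fin L) (Fin N) ℝ)
    (hP : (Cᵀ * C).PosDef) :
    ((hP.posSemidef.sqrt)⁻¹ * (Cᵀ * C + Dᵀ * D) * (hP.posSemidef.sqrt)⁻¹).IsSymm ∧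
    ∃ hS : ((hP.posSemidef.sqrt)⁻¹ * (Cᵀ * C + Dᵀ * D) *
        (hP.posSemidef.sqrt)⁻¹).IsHermitian,
      (Finset.univ.filter fun i => hS.eigenvalues i = 1).card = N - D.rank ∧
      (Finset.univ.filter fun i => 1 < hS.eigenvalues i).card = D.rank :=
  preconditioned_spectrum_tall_general C D hP
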